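/- arXiv:1708.07707 — 2 statements merged into one kernel-verified Lean document; each statement's English description precedes it below -/
import Mathlib

section
/- Define the tomogram of a Schwartz kernel ρ ∈ S(ℝ²) by ω(X, φ) = (1/2π) ∫_ℝ ∫_ℝ e^{i(s cos φ − X) t} ρ(s − (t sin φ)/2, s + (t sin φ)/2) ds dt. Then the characteristic function F(x,y) = ∫_ℝ e^{ixt} ρ(t − y/2, t + y/2) dt satisfies the inversion formula F(r cos φ, r sin φ) = ∫_ℝ e^{irX} ω(X, φ) dX for all r ∈ ℝ and φ ∈ [0, 2π). -/
/-!
Write `c = cos φ`, `m = sin φ` and `g t = F (t c, t m)`. Unfolding the definitions,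
`ω X φ = (2π)⁻¹ 𝓕 g (X / 2π)`, so the claim is Fourier inversion for `g` at `r`: it remains to
show that `g` is continuous and that `g` and `𝓕 g` are integrable.

Everything is controlled by one-dimensional slices of Schwartz functions on `ℝ²`, whose Fourier
transforms decay like `(1 + y²)⁻ᵏ (1 + ξ²)⁻¹` uniformly in the slice parameter `y` (bound the
`L¹` norms of the slice and of its second derivative). In centre/difference coordinates
`σ (s, u) = ρ (s - u/2, s + u/2)`, `g t` is the Fourier transform of `σ (·, t m)` at `-t c / 2π`,
which gives the decay of `g`. If `m = 0`, `g` is a rescaled Fourier transform of a Schwartz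
function. If `m ≠ 0`, Fubini and the substitution `u = t m` write `𝓕 g ξ` as `|m|⁻¹` times an
integral over `s` of Fourier transforms of `σ (s, ·)`, and Peetre's inequality turns the decay of
those into decay of `𝓕 g` in `ξ`.
-/

open MeasureTheory Real Complex SchwartzMap
open scoped FourierTransform LineDeriv

theorem one_add_sq_le_of_sq_add_sq_eq_one {c m : ℝ} (hcm : c ^ 2 + m ^ 2 = 1) (t : ℝ) :
    1 + t ^ 2 ≤ (1 + (t * m) ^ 2) * (1 + (t * c) ^ 2) := by
  nlinarith [mul_nonneg (sq_nonneg (t * m)) (sq_nonneg (t * c))]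

theorem inv_one_add_sq_le_two_mul (a b : ℝ) :
    (1 + a ^ 2)⁻¹ ≤ 2 * (1 + b ^ 2) * (1 + (a + b) ^ 2)⁻¹ := by
  rw [← div_eq_mul_inv, le_div_iff₀ (by positivity), inv_mul_le_iff₀ (by positivity)]
  nlinarith [sq_nonneg (a - b), sq_nonneg (a * b)]

theorem inv_one_add_sq_sq_mul_inv_one_add_sq_sub_le (a b s : ℝ) :
    ((1 + s ^ 2) ^ 2)⁻¹ * (1 + (a - b * s) ^ 2)⁻¹ ≤
      2 * (1 + b ^ 2) * (1 + a ^ 2)⁻¹ * (1 + s ^ 2)⁻¹ := by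
  have hpeetre := inv_one_add_sq_le_two_mul (a - b * s) (b * s)
  rw [sub_add_cancel] at hpeetre
  have hshift : 1 + (b * s) ^ 2 ≤ (1 + b ^ 2) * (1 + s ^ 2) := by
    nlinarith [mul_nonneg (sq_nonneg b) (sq_nonneg s)]
  calc _ ≤ ((1 + s ^ 2) ^ 2)⁻¹ * (2 * (1 + (b * s) ^ 2) * (1 + a ^ 2)⁻¹) := by gcongr
    _ ≤ ((1 + s ^ 2) ^ 2)⁻¹ * (2 * ((1 + b ^ 2) * (1 + s ^ 2)) * (1 + a ^ 2)⁻¹) := by gcongr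
    _ = _ := by field_simp

theorem norm_exp_I_mul_ofReal_mul_ofReal (x t : ℝ) : ‖exp (I * x * t)‖ = 1 := by
  rw [show I * x * t = ↑(x * t) * I by push_cast; ring, norm_exp_ofReal_mul_I]

theorem integral_exp_mul_comp_mul_right_eq_fourier {E : Type*} [NormedAddCommGroup E]
    [NormedSpace ℂ E] (f : ℝ → E) {m : ℝ} (hm : m ≠ 0) (a : ℝ) :
    ∫ t, exp (↑(t * a) * I) • f (t * m) = |m|⁻¹ • 𝓕 f (-a / (2 * π * m)) := by
  rw [Real.fourier_eq', ← abs_inv, ← Measure.integral_comp_mul_right]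
  refine integral_congr_ae (.of_forall fun t => ?_)
  simp only [RCLike.inner_apply, conj_trivial]
  congr 3
  field_simp

theorem integral_exp_mul_fourier_div_two_pi {g : ℝ → ℂ} (hg : Integrable g)
    (hFg : Integrable (𝓕 g)) {r : ℝ} (hr : ContinuousAt g r) :
    ∫ X : ℝ, exp (I * r * X) * ((1 / (2 * π) : ℝ) * 𝓕 g (X / (2 * π))) = g r := by
  set φ : ℝ → ℂ := fun ξ => ((1 / (2 * π) : ℝ) : ℂ) * (exp (↑(2 * π * (r * ξ)) * I) • 𝓕 g ξ)
  have hsub : ∫ X : ℝ, exp (I * r * X) * ((1 / (2 * π) : ℝ) * 𝓕 g (X / (2 * π))) =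
      ∫ X : ℝ, φ (X / (2 * π)) := by
    refine integral_congr_ae (.of_forall fun X => ?_)
    simp only [φ, smul_eq_mul]
    rw [show 2 * π * (r * (X / (2 * π))) = r * X by field_simp,
      show ((r * X : ℝ) : ℂ) * I = I * r * X by push_cast; ring]
    push_cast
    ring
  rw [hsub, Measure.integral_comp_div, integral_const_mul, ← hg.fourierInv_fourier_eq hFg hr,
    Real.fourierInv_eq', abs_of_pos (by positivity), Complex.real_smul, ← mul_assoc, ← ofReal_mul,
    mul_one_div_cancel (by positivity), ofReal_one, one_mul]
  simp only [RCLike.inner_apply, conj_trivial]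

theorem Function.hasTemperateGrowth_prodMk_const (y : ℝ) :
    Function.HasTemperateGrowth (fun x : ℝ => (x, y)) := by
  convert (ContinuousLinearMap.inl ℝ ℝ ℝ).hasTemperateGrowth.add
    (Function.HasTemperateGrowth.const ((0 : ℝ), y)) using 1
  ext x <;> simp

namespace SchwartzMap

section Coordinates

variable {X Y E : Type*} [NormedAddCommGroup X] [NormedSpace ℝ X] [NormedAddCommGroup Y]
  [NormedSpace ℝ Y] [NormedAddCommGroup E] [NormedSpace ℝ E]

noncomputable def swap (f : 𝓢(X × Y, E)) : 𝓢(Y × X, E) :=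
  compCLMOfContinuousLinearEquiv ℝ (ContinuousLinearEquiv.prodComm ℝ Y X) f

noncomputable def centerDiffEquiv : (ℝ × ℝ) ≃L[ℝ] (ℝ × ℝ) :=
  LinearEquiv.toContinuousLinearEquiv
    { toFun := fun p => (p.1 - p.2 / 2, p.1 + p.2 / 2)
      invFun := fun q => ((q.1 + q.2) / 2, q.2 - q.1)
      map_add' := fun p q => by ext <;> simp <;> ring
      map_smul' := fun a p => by ext <;> simp <;> ring
      left_inv := fun p => by ext <;> simp
      right_inv := fun q => by ext <;> simp <;> ring }

noncomputable def centerDiff (f : 𝓢(ℝ × ℝ, E)) : 𝓢(ℝ × ℝ, E) :=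
  compCLMOfContinuousLinearEquiv ℝ centerDiffEquiv f

@[simp] theorem centerDiff_apply (f : 𝓢(ℝ × ℝ, E)) (s u : ℝ) :
    f.centerDiff (s, u) = f (s - u / 2, s + u / 2) := rfl

end Coordinates

section Real

variable {E : Type*} [NormedAddCommGroup E] [NormedSpace ℝ E]

noncomputable def slice (f : 𝓢(ℝ × ℝ, E)) (y : ℝ) : 𝓢(ℝ, E) :=
  compCLM ℝ (Function.hasTemperateGrowth_prodMk_const y) ⟨1, 1, fun x => by
    rw [pow_one, one_mul]; exact (norm_fst_le (x, y)).trans (le_add_of_nonneg_left zero_le_one)⟩ f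

@[simp] theorem slice_apply (f : 𝓢(ℝ × ℝ, E)) (y x : ℝ) : slice f y x = f (x, y) := rfl

theorem lineDerivOp_slice (f : 𝓢(ℝ × ℝ, E)) (y : ℝ) :
    ∂_{(1 : ℝ)} (slice f y) = slice (∂_{((1 : ℝ), (0 : ℝ))} f) y := by
  ext x
  have hd : HasDerivAt (fun x : ℝ => f (x, y)) (fderiv ℝ f (x, y) (1, 0)) x :=
    (f.hasFDerivAt (x, y)).comp_hasDerivAt x ((hasDerivAt_id x).prodMk (hasDerivAt_const x y))
  simp only [lineDerivOp_apply_eq_fderiv, slice_apply]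
  rw [show ⇑(slice f y) = fun x => f (x, y) from rfl, hd.hasFDerivAt.fderiv]
  simp

theorem exists_norm_le_inv_one_add_sq (f : 𝓢(ℝ × ℝ, E)) (k : ℕ) :
    ∃ C, ∀ x y : ℝ, ‖f (x, y)‖ ≤ C * ((1 + y ^ 2) ^ k)⁻¹ * (1 + x ^ 2)⁻¹ := by
  refine ⟨2 ^ (2 * (k + 1)) * ((Finset.Iic (2 * (k + 1), 0)).sup
    fun m => SchwartzMap.seminorm ℝ m.1 m.2) f, fun x y => ?_⟩
  have hdecay := one_add_le_sup_seminorm_apply (𝕜 := ℝ) (m := (2 * (k + 1), 0)) le_rfl le_rfl f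
    (x, y)
  rw [norm_iteratedFDeriv_zero] at hdecay
  have one_add_sq_le {a : ℝ} (ha : |a| ≤ ‖(x, y)‖) : 1 + a ^ 2 ≤ (1 + ‖(x, y)‖) ^ 2 := by
    nlinarith [abs_nonneg a, sq_abs a, norm_nonneg (x, y)]
  have hweight : (1 + y ^ 2) ^ k * (1 + x ^ 2) ≤ (1 + ‖(x, y)‖) ^ (2 * (k + 1)) := by
    rw [pow_mul, pow_succ _ k]
    gcongr
    exacts [one_add_sq_le (norm_snd_le (x, y)), one_add_sq_le (norm_fst_le (x, y))]
  rw [mul_assoc, ← mul_inv, ← div_eq_mul_inv, le_div_iff₀ (by positivity)]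
  nlinarith [norm_nonneg (f (x, y))]

theorem exists_integral_norm_slice_le (f : 𝓢(ℝ × ℝ, E)) (k : ℕ) :
    ∃ C, ∀ y : ℝ, ∫ x, ‖slice f y x‖ ≤ C * ((1 + y ^ 2) ^ k)⁻¹ := by
  obtain ⟨C, hC⟩ := exists_norm_le_inv_one_add_sq f k
  refine ⟨C * π, fun y => ?_⟩
  calc ∫ x, ‖slice f y x‖ ≤ ∫ x, C * ((1 + y ^ 2) ^ k)⁻¹ * (1 + x ^ 2)⁻¹ :=
        integral_mono_of_nonneg (.of_forall fun _ => norm_nonneg _)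
          (integrable_inv_one_add_sq.const_mul _) (.of_forall fun x => hC x y)
    _ = C * π * ((1 + y ^ 2) ^ k)⁻¹ := by
        rw [integral_const_mul, integral_univ_inv_one_add_sq]; ring

theorem integrable_comp_swap_mul_right (f : 𝓢(ℝ × ℝ, E)) {m : ℝ} (hm : m ≠ 0) :
    Integrable (fun p : ℝ × ℝ => f (p.2, p.1 * m)) ((volume : Measure ℝ).prod volume) := by
  rw [← Measure.volume_eq_prod]
  exact (compCLMOfContinuousLinearEquiv ℝ ((ContinuousLinearEquiv.refl ℝ ℝ).prodCongr
    (ContinuousLinearEquiv.unitsEquivAut ℝ (Units.mk0 m hm))) f).swap.integrable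

end Real

section Complex

variable {E : Type*} [NormedAddCommGroup E] [NormedSpace ℂ E]

theorem fourier_lineDerivOp_lineDerivOp_one_apply (h : 𝓢(ℝ, E)) (ξ : ℝ) :
    𝓕 (∂_{(1 : ℝ)} (∂_{(1 : ℝ)} h)) ξ = (-(2 * π * ξ) ^ 2 : ℂ) • 𝓕 h ξ := by
  simp only [fourier_lineDerivOp_eq, smul_apply,
    smulLeftCLM_apply_apply (Function.hasTemperateGrowth_inner_left _)]
  simp only [RCLike.inner_apply, conj_trivial, one_mul, ← Complex.coe_smul, smul_smul]
  congr 1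
  linear_combination (4 * π ^ 2 * ξ ^ 2 : ℂ) * I_sq

theorem norm_fourier_apply_le_integral_norm (h : 𝓢(ℝ, E)) (ξ : ℝ) :
    ‖𝓕 h ξ‖ ≤ ∫ x, ‖h x‖ :=
  VectorFourier.norm_fourierIntegral_le_integral_norm _ _ _ _ _

theorem one_add_sq_mul_norm_fourier_le (h : 𝓢(ℝ, E)) (ξ : ℝ) :
    (1 + (2 * π * ξ) ^ 2) * ‖𝓕 h ξ‖ ≤
      (∫ x, ‖h x‖) + ∫ x, ‖∂_{(1 : ℝ)} (∂_{(1 : ℝ)} h) x‖ := by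
  have h₀ := norm_fourier_apply_le_integral_norm h ξ
  have h₂ := norm_fourier_apply_le_integral_norm (∂_{(1 : ℝ)} (∂_{(1 : ℝ)} h)) ξ
  rw [fourier_lineDerivOp_lineDerivOp_one_apply, norm_smul, norm_neg, norm_pow, ← ofReal_ofNat,
    ← ofReal_mul, ← ofReal_mul, norm_real, Real.norm_eq_abs, sq_abs] at h₂
  linarith

theorem exists_norm_fourier_slice_le (f : 𝓢(ℝ × ℝ, E)) (k : ℕ) :
    ∃ C, ∀ y ξ : ℝ, ‖𝓕 (slice f y) ξ‖ ≤ C * ((1 + y ^ 2) ^ k)⁻¹ * (1 + (2 * π * ξ) ^ 2)⁻¹ := by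
  obtain ⟨C₀, hC₀⟩ := exists_integral_norm_slice_le f k
  obtain ⟨C₂, hC₂⟩ :=
    exists_integral_norm_slice_le (∂_{((1 : ℝ), (0 : ℝ))} (∂_{((1 : ℝ), (0 : ℝ))} f)) k
  refine ⟨C₀ + C₂, fun y ξ => ?_⟩
  have h := one_add_sq_mul_norm_fourier_le (slice f y) ξ
  rw [lineDerivOp_slice, lineDerivOp_slice] at h
  rw [← div_eq_mul_inv, le_div_iff₀ (by positivity), mul_comm]
  linarith [hC₀ y, hC₂ y]

theorem integrable_fourier_comp_mul_left (h : 𝓢(ℝ, E)) {a : ℝ} (ha : a ≠ 0) :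
    Integrable (𝓕 fun t => h (a * t)) := by
  have hscale : (fun t => h (a * t)) = ⇑(compCLMOfContinuousLinearEquiv ℝ
      (ContinuousLinearEquiv.unitsEquivAut ℝ (Units.mk0 a ha)) h) :=
    funext fun t => by simp [mul_comm]
  rw [hscale, ← fourier_coe]
  exact SchwartzMap.integrable _

end Complex

end SchwartzMap

namespace Tomogram

variable (ρ : 𝓢(ℝ × ℝ, ℂ))

noncomputable def kernelCharFun (x y : ℝ) : ℂ :=
  ∫ t : ℝ, exp (I * x * t) * ρ (t - y / 2, t + y / 2)

theorem kernelCharFun_eq_fourier_slice (x y : ℝ) :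
    kernelCharFun ρ x y = 𝓕 (slice ρ.centerDiff y) (-x / (2 * π)) := by
  rw [fourier_coe, Real.fourier_eq']
  refine integral_congr_ae (.of_forall fun t => ?_)
  simp only [slice_apply, centerDiff_apply, smul_eq_mul, RCLike.inner_apply, conj_trivial]
  congr 2
  push_cast
  field_simp

theorem continuous_kernelCharFun : Continuous fun p : ℝ × ℝ => kernelCharFun ρ p.1 p.2 := by
  obtain ⟨C, hC⟩ := exists_norm_le_inv_one_add_sq ρ.centerDiff 0
  have hcont (t : ℝ) :
      Continuous fun p : ℝ × ℝ => exp (I * p.1 * t) * ρ (t - p.2 / 2, t + p.2 / 2) := by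
    fun_prop
  refine continuous_of_dominated (bound := fun t => C * (1 + t ^ 2)⁻¹)
    (fun p => (Continuous.aestronglyMeasurable (by fun_prop)))
    (fun p => .of_forall fun t => ?_) (integrable_inv_one_add_sq.const_mul C) (.of_forall hcont)
  simpa [norm_exp_I_mul_ofReal_mul_ofReal] using hC t p.2

theorem exists_norm_kernelCharFun_le :
    ∃ C, ∀ x y : ℝ, ‖kernelCharFun ρ x y‖ ≤ C * (1 + y ^ 2)⁻¹ * (1 + x ^ 2)⁻¹ := by
  obtain ⟨C, hC⟩ := exists_norm_fourier_slice_le ρ.centerDiff 1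
  refine ⟨C, fun x y => ?_⟩
  rw [kernelCharFun_eq_fourier_slice]
  convert hC y (-x / (2 * π)) using 3
  · ring
  · field_simp

variable {c m : ℝ}

theorem continuous_kernelCharFun_ray :
    Continuous fun t => kernelCharFun ρ (t * c) (t * m) :=
  (continuous_kernelCharFun ρ).comp (by fun_prop : Continuous fun t : ℝ => (t * c, t * m))

theorem integrable_kernelCharFun_ray (hcm : c ^ 2 + m ^ 2 = 1) :
    Integrable fun t => kernelCharFun ρ (t * c) (t * m) := by
  obtain ⟨C, hC⟩ := exists_norm_kernelCharFun_le ρ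
  have hC₀ : 0 ≤ C := by simpa using (norm_nonneg _).trans (hC 0 0)
  refine (integrable_inv_one_add_sq.const_mul C).mono'
    (continuous_kernelCharFun_ray ρ).aestronglyMeasurable (.of_forall fun t => ?_)
  calc _ ≤ C * (1 + (t * m) ^ 2)⁻¹ * (1 + (t * c) ^ 2)⁻¹ := hC _ _
    _ = C * ((1 + (t * m) ^ 2) * (1 + (t * c) ^ 2))⁻¹ := by rw [mul_inv, mul_assoc]
    _ ≤ C * (1 + t ^ 2)⁻¹ := by
        gcongr
        exact one_add_sq_le_of_sq_add_sq_eq_one hcm t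

theorem integrable_fourier_kernelCharFun_ray_of_eq_zero (hc : c ≠ 0) :
    Integrable (𝓕 fun t => kernelCharFun ρ (t * c) (t * 0)) := by
  have hray : (fun t => kernelCharFun ρ (t * c) (t * 0)) =
      fun t => 𝓕 (slice ρ.centerDiff 0) (-c / (2 * π) * t) := by
    ext t
    rw [kernelCharFun_eq_fourier_slice, mul_zero]
    congr 1
    ring
  rw [hray]
  exact (𝓕 (slice ρ.centerDiff 0)).integrable_fourier_comp_mul_left
    (div_ne_zero (neg_ne_zero.2 hc) (by positivity))

theorem fourier_kernelCharFun_ray_eq (hm : m ≠ 0) (ξ : ℝ) :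
    𝓕 (fun t => kernelCharFun ρ (t * c) (t * m)) ξ =
      |m|⁻¹ • ∫ s, 𝓕 (slice ρ.centerDiff.swap s) ((2 * π * ξ - s * c) / (2 * π * m)) := by
  have hphase : Integrable (fun p : ℝ × ℝ =>
      exp (↑(p.1 * (p.2 * c - 2 * π * ξ)) * I) * ρ.centerDiff (p.2, p.1 * m))
      ((volume : Measure ℝ).prod volume) :=
    (ρ.centerDiff.integrable_comp_swap_mul_right hm).bdd_mul (c := 1)
      (Continuous.aestronglyMeasurable (by fun_prop))
      (.of_forall fun p => (norm_exp_ofReal_mul_I _).le)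
  calc 𝓕 (fun t => kernelCharFun ρ (t * c) (t * m)) ξ
      = ∫ t, ∫ s, exp (↑(t * (s * c - 2 * π * ξ)) * I) * ρ.centerDiff (s, t * m) := by
        rw [Real.fourier_eq']
        refine integral_congr_ae (.of_forall fun t => ?_)
        simp only [kernelCharFun, smul_eq_mul, RCLike.inner_apply, conj_trivial, centerDiff_apply]
        rw [← integral_const_mul]
        refine integral_congr_ae (.of_forall fun s => ?_)
        dsimp only
        rw [← mul_assoc, ← Complex.exp_add]
        congr 2
        push_cast
        ring
    _ = ∫ s, ∫ t, exp (↑(t * (s * c - 2 * π * ξ)) * I) * ρ.centerDiff (s, t * m) :=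
        integral_integral_swap hphase
    _ = _ := by
        rw [← integral_smul]
        refine integral_congr_ae (.of_forall fun s => ?_)
        have hscale := integral_exp_mul_comp_mul_right_eq_fourier (slice ρ.centerDiff.swap s) hm
          (s * c - 2 * π * ξ)
        rwa [neg_sub, ← fourier_coe] at hscale

theorem exists_norm_fourier_kernelCharFun_ray_le (hm : m ≠ 0) :
    ∃ K, ∀ ξ, ‖𝓕 (fun t => kernelCharFun ρ (t * c) (t * m)) ξ‖ ≤
      K * (1 + (2 * π / m * ξ) ^ 2)⁻¹ := by
  -- one factor `(1 + s ^ 2)⁻¹` of the decay is spent on Peetre's inequality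
  obtain ⟨C, hC⟩ := exists_norm_fourier_slice_le ρ.centerDiff.swap 2
  have hC₀ : 0 ≤ C := by simpa using (norm_nonneg _).trans (hC 0 0)
  set D := 2 * C * (1 + (c / m) ^ 2) with hD
  refine ⟨|m|⁻¹ * (D * π), fun ξ => ?_⟩
  have hslice (s : ℝ) : ‖𝓕 (slice ρ.centerDiff.swap s) ((2 * π * ξ - s * c) / (2 * π * m))‖ ≤
      D * (1 + (2 * π / m * ξ) ^ 2)⁻¹ * (1 + s ^ 2)⁻¹ := by
    calc _ ≤ C * ((1 + s ^ 2) ^ 2)⁻¹ * (1 + (2 * π / m * ξ - c / m * s) ^ 2)⁻¹ := by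
          convert hC s ((2 * π * ξ - s * c) / (2 * π * m)) using 4
          field_simp
      _ ≤ C * (2 * (1 + (c / m) ^ 2) * (1 + (2 * π / m * ξ) ^ 2)⁻¹ * (1 + s ^ 2)⁻¹) := by
          rw [mul_assoc]
          exact mul_le_mul_of_nonneg_left (inv_one_add_sq_sq_mul_inv_one_add_sq_sub_le _ _ _) hC₀
      _ = _ := by rw [hD]; ring
  rw [fourier_kernelCharFun_ray_eq ρ hm, norm_smul, norm_inv, Real.norm_eq_abs, abs_abs,
    mul_assoc |m|⁻¹]
  refine mul_le_mul_of_nonneg_left ?_ (by positivity)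
  calc _ ≤ ∫ s, ‖𝓕 (slice ρ.centerDiff.swap s) ((2 * π * ξ - s * c) / (2 * π * m))‖ :=
        norm_integral_le_integral_norm _
    _ ≤ ∫ s, D * (1 + (2 * π / m * ξ) ^ 2)⁻¹ * (1 + s ^ 2)⁻¹ :=
        integral_mono_of_nonneg (.of_forall fun _ => norm_nonneg _)
          (integrable_inv_one_add_sq.const_mul _) (.of_forall hslice)
    _ = D * π * (1 + (2 * π / m * ξ) ^ 2)⁻¹ := by
        rw [integral_const_mul, integral_univ_inv_one_add_sq]; ring

theorem integrable_fourier_kernelCharFun_ray (hcm : c ^ 2 + m ^ 2 = 1) :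
    Integrable (𝓕 fun t => kernelCharFun ρ (t * c) (t * m)) := by
  rcases eq_or_ne m 0 with rfl | hm
  · exact integrable_fourier_kernelCharFun_ray_of_eq_zero ρ (by rintro rfl; norm_num at hcm)
  obtain ⟨K, hK⟩ := exists_norm_fourier_kernelCharFun_ray_le ρ (c := c) hm
  have hscaled : Integrable fun ξ : ℝ => (1 + (2 * π / m * ξ) ^ 2)⁻¹ :=
    (integrable_comp_mul_left_iff (fun x : ℝ => (1 + x ^ 2)⁻¹)
      (div_ne_zero (by positivity) hm)).2 integrable_inv_one_add_sq
  exact (hscaled.const_mul K).mono'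
    (VectorFourier.fourierIntegral_continuous Real.continuous_fourierChar
      (innerSL ℝ).continuous₂ (integrable_kernelCharFun_ray ρ hcm)).aestronglyMeasurable
    (.of_forall hK)

theorem integral_integral_eq_fourier_kernelCharFun_ray (X : ℝ) :
    ∫ t : ℝ, ∫ s : ℝ, exp (I * (s * c - X) * t) * ρ (s - t * m / 2, s + t * m / 2) =
      𝓕 (fun t => kernelCharFun ρ (t * c) (t * m)) (X / (2 * π)) := by
  rw [Real.fourier_eq']
  refine integral_congr_ae (.of_forall fun t => ?_)
  simp only [kernelCharFun, smul_eq_mul, RCLike.inner_apply, conj_trivial]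
  rw [← integral_const_mul]
  refine integral_congr_ae (.of_forall fun s => ?_)
  dsimp only
  rw [← mul_assoc, ← Complex.exp_add]
  congr 2
  rw [show -2 * π * (X / (2 * π) * t) = -(X * t) by field_simp]
  simp only [ofReal_neg, ofReal_mul]
  ring

end Tomogram

open Real in
theorem tomogram_inversion (ρ : SchwartzMap (ℝ × ℝ) ℂ) (ω : ℝ → ℝ → ℂ) (F : ℝ × ℝ → ℂ)
    (hω : ∀ X φ : ℝ, ω X φ = (1 / (2 * π) : ℝ) *
      ∫ t : ℝ, ∫ s : ℝ, Complex.exp (Complex.I * (s * Real.cos φ - X) * t) *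
        ρ (s - t * Real.sin φ / 2, s + t * Real.sin φ / 2))
    (hF : ∀ x y : ℝ, F (x, y) =
      ∫ t : ℝ, Complex.exp (Complex.I * x * t) * ρ (t - y / 2, t + y / 2)) :
    ∀ (r : ℝ) (φ : ℝ), φ ∈ Set.Ico (0 : ℝ) (2 * π) →
      F (r * Real.cos φ, r * Real.sin φ)
        = ∫ X : ℝ, Complex.exp (Complex.I * r * X) * ω X φ := by
  intro r φ _
  have hcs := Real.cos_sq_add_sin_sq φ
  simp_rw [hω, Tomogram.integral_integral_eq_fourier_kernelCharFun_ray]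
  exact (hF _ _).trans (integral_exp_mul_fourier_div_two_pi
    (Tomogram.integrable_kernelCharFun_ray ρ hcs)
    (Tomogram.integrable_fourier_kernelCharFun_ray ρ hcs)
    (Tomogram.continuous_kernelCharFun_ray ρ).continuousAt).symm
end

section
/- For ρ ∈ S(ℝ²) and each fixed φ, the function X ↦ ω(X, φ) = (1/2π) ∫∫ e^{i(s cos φ − X)t} ρ(s − (t sin φ)/2, s + (t sin φ)/2) ds dt belongs to the Schwartz space S(ℝ). -/
/-!
When `sin φ ≠ 0` the shear `(s, t) ↦ (s - t sin φ / 2, s + t sin φ / 2)` is invertible, so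
`ρ` composed with it and multiplied by the chirp `e^{i s t cos φ}` (whose derivatives grow
at most polynomially) is a Schwartz function of `(s, t)`; `ω(·, φ)` is then the
two-dimensional Fourier transform of that function, restricted to the line `{0} × ℝ` and rescaled.
When `sin φ = 0` only the diagonal `s ↦ ρ (s, s)` enters, and `ω(·, φ)` is obtained from it by two
one-dimensional Fourier transforms, the inner one rescaled by `cos φ ≠ 0`.
-/

open Real MeasureTheory Complex
open scoped FourierTransform SchwartzMap

theorem iteratedDeriv_cexp_ofReal_mul_I (n : ℕ) :
    iteratedDeriv n (fun t : ℝ => cexp (t * I)) = fun t : ℝ => I ^ n * cexp (t * I) := by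
  induction n with
  | zero => simp
  | succ n ih =>
    rw [iteratedDeriv_succ, ih]
    ext t
    have h := (((hasDerivAt_id (t : ℂ)).mul_const I).cexp.comp_ofReal).const_mul (I ^ n)
    simp only [id, one_mul] at h
    rw [h.deriv, pow_succ]
    ring

theorem Complex.hasTemperateGrowth_cexp_ofReal_mul_I :
    Function.HasTemperateGrowth (fun t : ℝ => cexp (t * I)) := by
  refine ⟨(ofRealCLM.contDiff.mul contDiff_const).cexp, fun n => ⟨0, 1, fun t => ?_⟩⟩
  rw [norm_iteratedFDeriv_eq_norm_iteratedDeriv, iteratedDeriv_cexp_ofReal_mul_I]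
  simp [norm_exp_ofReal_mul_I]

theorem Complex.hasTemperateGrowth_cexp_I_mul_fst_mul_snd (c : ℝ) :
    Function.HasTemperateGrowth (fun p : ℝ × ℝ => cexp (I * c * p.1 * p.2)) := by
  have hq : Function.HasTemperateGrowth (fun p : ℝ × ℝ => c * p.1 * p.2) :=
    ((Function.HasTemperateGrowth.const c).mul
      (ContinuousLinearMap.fst ℝ ℝ ℝ).hasTemperateGrowth).mul
      (ContinuousLinearMap.snd ℝ ℝ ℝ).hasTemperateGrowth
  convert hasTemperateGrowth_cexp_ofReal_mul_I.comp hq using 2 with p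
  simp only [Function.comp_apply]
  push_cast
  ring_nf

theorem Complex.integral_eq_integral_integral {E : Type*} [NormedAddCommGroup E]
    [NormedSpace ℝ E] [CompleteSpace E] {h : ℂ → E} (hh : Integrable h) :
    ∫ z, h z = ∫ t : ℝ, ∫ s : ℝ, h ⟨s, t⟩ := by
  have e := volume_preserving_equiv_real_prod.symm
  rw [← e.integral_comp measurableEquivRealProd.symm.measurableEmbedding, Measure.volume_eq_prod,
    integral_prod_symm]
  · rfl
  · rw [← Measure.volume_eq_prod]
    exact (e.integrable_comp_emb measurableEquivRealProd.symm.measurableEmbedding).mpr hh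

namespace SchwartzMap

theorem exists_coe_eq_comp_of_injective {D F G : Type*} [NormedAddCommGroup D] [NormedSpace ℝ D]
    [FiniteDimensional ℝ D] [NormedAddCommGroup F] [NormedSpace ℝ F] [NormedAddCommGroup G]
    [NormedSpace ℝ G] (f : 𝓢(F, G)) (L : D →L[ℝ] F) (hL : Function.Injective L) :
    ∃ g : 𝓢(D, G), ⇑g = f ∘ L := by
  obtain ⟨K, -, hK⟩ := L.toLinearMap.injective_iff_antilipschitz.mp hL
  exact ⟨compCLMOfAntilipschitz ℝ L.hasTemperateGrowth hK f, rfl⟩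

variable {E : Type*} [NormedAddCommGroup E] [NormedSpace ℂ E]

theorem exists_eq_integral_cexp_smul (f : 𝓢(ℝ, E)) {a : ℝ} (ha : a ≠ 0) :
    ∃ g : 𝓢(ℝ, E), ∀ x : ℝ, g x = ∫ t : ℝ, cexp (I * a * x * t) • f t := by
  have hL : Function.Injective ((-a / (2 * π)) • ContinuousLinearMap.id ℝ ℝ) := by
    intro x y h
    simpa [ha, pi_ne_zero] using h
  obtain ⟨g, hg⟩ := exists_coe_eq_comp_of_injective (𝓕 f) _ hL
  refine ⟨g, fun x => ?_⟩
  rw [hg, Function.comp_apply, fourier_coe, Real.fourier_real_eq_integral_exp_smul]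
  congr 1 with t
  congr 2
  simp only [FunLike.coe_smul, ContinuousLinearMap.coe_id', Pi.smul_apply, id_eq, smul_eq_mul]
  push_cast
  field_simp

theorem exists_eq_integral_cexp_smul_integral [CompleteSpace E] (F : 𝓢(ℝ × ℝ, E)) {a : ℝ}
    (ha : a ≠ 0) :
    ∃ g : 𝓢(ℝ, E), ∀ x : ℝ, g x = ∫ t : ℝ, cexp (I * a * x * t) • ∫ s : ℝ, F (s, t) := by
  set L : ℝ →L[ℝ] ℂ := ((-a / (2 * π)) • ContinuousLinearMap.id ℝ ℝ).smulRight I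
  have hL : Function.Injective L := by
    intro x y h
    simpa [L, ha, pi_ne_zero] using h
  -- `ℝ × ℝ` carries the sup norm, so the Fourier transform is taken on `ℂ`, a Euclidean plane.
  obtain ⟨F', hF'⟩ := exists_coe_eq_comp_of_injective F equivRealProdCLM.toContinuousLinearMap
    equivRealProdCLM.injective
  obtain ⟨g, hg⟩ := exists_coe_eq_comp_of_injective (𝓕 F') L hL
  refine ⟨g, fun x => ?_⟩
  rw [hg, Function.comp_apply, fourier_coe, Real.fourier_eq, Complex.integral_eq_integral_integral
    ((Real.fourierIntegral_convergent_iff _).mpr F'.integrable)]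
  congr 1 with t
  rw [← integral_smul]
  congr 1 with s
  have hinner : inner ℝ (⟨s, t⟩ : ℂ) (L x) = -(a * x * t) / (2 * π) := by
    simp only [Complex.inner, L, ContinuousLinearMap.smulRight_apply, FunLike.coe_smul,
      Pi.smul_apply, ContinuousLinearMap.coe_id', id_eq, smul_eq_mul, Complex.mul_re,
      Complex.smul_re, Complex.smul_im, conj_re, conj_im, I_re, I_im]
    ring
  rw [Circle.smul_def, Real.fourierChar_apply, hinner, hF', Function.comp_apply]
  change _ • F (s, t) = _
  congr 2
  push_cast
  field_simp

theorem exists_eq_cexp_smul_comp_shear (ρ : 𝓢(ℝ × ℝ, E)) {b : ℝ} (hb : b ≠ 0) (c : ℝ) :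
    ∃ F : 𝓢(ℝ × ℝ, E), ∀ s t : ℝ,
      F (s, t) = cexp (I * c * s * t) • ρ (s - t * b / 2, s + t * b / 2) := by
  set L : ℝ × ℝ →L[ℝ] ℝ × ℝ :=
    (ContinuousLinearMap.fst ℝ ℝ ℝ - (b / 2) • ContinuousLinearMap.snd ℝ ℝ ℝ).prod
      (ContinuousLinearMap.fst ℝ ℝ ℝ + (b / 2) • ContinuousLinearMap.snd ℝ ℝ ℝ)
  have hL_apply : ∀ p, L p = (p.1 - b / 2 * p.2, p.1 + b / 2 * p.2) := fun p => rfl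
  have hL : Function.Injective L := by
    rintro ⟨s, t⟩ ⟨s', t'⟩ h
    simp only [hL_apply, Prod.mk.injEq] at h
    obtain rfl : t = t' := by
      have h' : b * (t - t') = 0 := by linarith
      linarith [(mul_eq_zero.mp h').resolve_left hb]
    exact Prod.ext (by linarith) rfl
  obtain ⟨G, hG⟩ := exists_coe_eq_comp_of_injective ρ L hL
  refine ⟨smulLeftCLM E (fun p : ℝ × ℝ => cexp (I * c * p.1 * p.2)) G, fun s t => ?_⟩
  rw [smulLeftCLM_apply_apply (hasTemperateGrowth_cexp_I_mul_fst_mul_snd c), hG, Function.comp_apply, hL_apply]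
  ring_nf

theorem exists_eq_tomogram_integral (ρ : 𝓢(ℝ × ℝ, ℂ)) {b c : ℝ} (hbc : b ≠ 0 ∨ c ≠ 0) :
    ∃ g : 𝓢(ℝ, ℂ), ∀ X : ℝ, g X = ∫ t : ℝ, ∫ s : ℝ,
      cexp (I * (s * c - X) * t) * ρ (s - t * b / 2, s + t * b / 2) := by
  have hphase : ∀ X : ℝ, (∫ t : ℝ, ∫ s : ℝ,
      cexp (I * (s * c - X) * t) * ρ (s - t * b / 2, s + t * b / 2)) =
      ∫ t : ℝ, cexp (I * (-1 : ℝ) * X * t) •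
        ∫ s : ℝ, cexp (I * c * s * t) • ρ (s - t * b / 2, s + t * b / 2) := by
    intro X
    congr 1 with t
    rw [← integral_smul]
    congr 1 with s
    rw [smul_smul, smul_eq_mul, ← Complex.exp_add]
    push_cast
    ring_nf
  simp_rw [hphase]
  rcases eq_or_ne b 0 with rfl | hb
  · obtain ⟨u, hu⟩ := exists_coe_eq_comp_of_injective ρ
      ((ContinuousLinearMap.id ℝ ℝ).prod (ContinuousLinearMap.id ℝ ℝ))
      fun x y h => congrArg Prod.fst h
    obtain ⟨v, hv⟩ := u.exists_eq_integral_cexp_smul (hbc.resolve_left (not_not.2 rfl))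
    obtain ⟨g, hg⟩ := v.exists_eq_integral_cexp_smul (neg_ne_zero.2 one_ne_zero)
    refine ⟨g, fun X => ?_⟩
    simp_rw [hg, hv, hu]
    simp [mul_right_comm]
  · obtain ⟨F, hF⟩ := exists_eq_cexp_smul_comp_shear ρ hb c
    obtain ⟨g, hg⟩ := F.exists_eq_integral_cexp_smul_integral (neg_ne_zero.2 one_ne_zero)
    exact ⟨g, fun X => by simp_rw [hg, hF]⟩

end SchwartzMap

open Real in
theorem tomogram_schwartz (ρ : SchwartzMap (ℝ × ℝ) ℂ) (ω : ℝ → ℝ → ℂ)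
    (hω : ∀ X φ : ℝ, ω X φ = (1 / (2 * π) : ℝ) *
      ∫ t : ℝ, ∫ s : ℝ, Complex.exp (Complex.I * (s * Real.cos φ - X) * t) *
        ρ (s - t * Real.sin φ / 2, s + t * Real.sin φ / 2)) :
    ∀ φ : ℝ, ∃ g : SchwartzMap ℝ ℂ, ∀ X : ℝ, g X = ω X φ := by
  intro φ
  have hsc : Real.sin φ ≠ 0 ∨ Real.cos φ ≠ 0 := by
    by_contra! h
    simpa [h.1, h.2] using Real.sin_sq_add_cos_sq φ
  obtain ⟨g, hg⟩ := ρ.exists_eq_tomogram_integral hsc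
  exact ⟨(1 / (2 * π) : ℝ) • g, fun X => by rw [hω, smul_apply, hg, real_smul]⟩
end
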